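/- arXiv:2303.03826 — 2 statements merged into one kernel-verified Lean document; each statement's English description precedes it below -/
import Mathlib

section
/- Let V ⊂ ℝ[t] be a finite-dimensional subspace, I ⊆ ℝ an unbounded non-degenerate closed interval, P = {f ∈ V : f ≥ 0 on I}, and 0 ≠ f ∈ P. Then the linear span of the supporting face of f in P equals U_f = {g ∈ V : deg(g) ≤ deg(f) and ord_s(g) ≥ ord_s(f) for all s ∈ I}. -/
/-!
If `g + h = c • f` with `g, h ≥ 0` on `I`, then `g` cannot vanish to lower order than `f` at a
point of `I` (there `g h` would change sign), nor have larger degree (the leading terms of `g` and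
`h` would cancel, giving `g h` a negative leading coefficient at the unbounded end of `I`). This
controls the face `{g ∈ P | c • f - g ∈ P}` generated by `f`, hence the supporting face.
Conversely, for `g ∈ U_f`, dividing `f` and `g` by the factor of `f` carrying its roots in `I`
leaves a ratio of polynomials whose denominator has no zero on the closed set `I` and whose degree
is not smaller, so `|g| ≤ M f` on `I`. Then `f ± ε • g ∈ P` for small `ε > 0`; both lie in every
face containing `2 • f`, and `g` lies in the span.
-/

open Polynomial

/-- A face of a convex cone `C`. -/
def IsFace (C F : Set (Polynomial ℝ)) : Prop :=
  F ⊆ C ∧ (∀ c : ℝ, 0 ≤ c → ∀ x ∈ F, c • x ∈ F) ∧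
    (∀ x ∈ F, ∀ y ∈ F, x + y ∈ F) ∧
    ∀ x ∈ C, ∀ y ∈ C, x + y ∈ F → x ∈ F ∧ y ∈ F

/-- The supporting face of `f` in `C`: the smallest face of `C` containing `f`. -/
def IsSupportingFace (C : Set (Polynomial ℝ)) (f : Polynomial ℝ)
    (F : Set (Polynomial ℝ)) : Prop :=
  IsFace C F ∧ f ∈ F ∧ ∀ F', IsFace C F' → f ∈ F' → F ⊆ F'

open Filter Set Topology Asymptotics

lemma isFace_setOf_smul_sub_mem (C : PointedCone ℝ ℝ[X]) (f : ℝ[X]) :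
    IsFace C {g | g ∈ C ∧ ∃ c : ℝ, 0 ≤ c ∧ c • f - g ∈ C} := by
  refine ⟨fun g hg => hg.1, ?_, ?_, ?_⟩
  · rintro c hc g ⟨hg, a, ha, hag⟩
    refine ⟨C.smul_mem hc hg, c * a, mul_nonneg hc ha, ?_⟩
    rw [mul_smul, ← smul_sub]
    exact C.smul_mem hc hag
  · rintro g ⟨hg, a, ha, hag⟩ g' ⟨hg', b, hb, hbg'⟩
    refine ⟨C.add_mem hg hg', a + b, add_nonneg ha hb, ?_⟩
    rw [add_smul, add_sub_add_comm]
    exact C.add_mem hag hbg'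
  · rintro g hg g' hg' ⟨-, c, hc, hcgg'⟩
    have hsub : c • f - g = (c • f - (g + g')) + g' := by abel
    have hsub' : c • f - g' = (c • f - (g + g')) + g := by abel
    exact ⟨⟨hg, c, hc, hsub ▸ C.add_mem hcgg' hg'⟩, ⟨hg', c, hc, hsub' ▸ C.add_mem hcgg' hg⟩⟩

lemma IsSupportingFace.exists_smul_sub_mem {C : PointedCone ℝ ℝ[X]} {f : ℝ[X]}
    {F : Set ℝ[X]} (hF : IsSupportingFace C f F) {g : ℝ[X]} (hg : g ∈ F) :
    ∃ c : ℝ, 0 ≤ c ∧ c • f - g ∈ C := by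
  have hf : f ∈ C := hF.1.1 hF.2.1
  refine (hF.2.2 _ (isFace_setOf_smul_sub_mem C f) ⟨hf, 1, zero_le_one, ?_⟩ hg).2
  simp

lemma IsFace.mem_span_of_add_sub_mem {C F : Set ℝ[X]} (hF : IsFace C F) {f g : ℝ[X]}
    (hf : f ∈ F) {ε : ℝ} (hε : ε ≠ 0) (hadd : f + ε • g ∈ C) (hsub : f - ε • g ∈ C) :
    g ∈ Submodule.span ℝ F := by
  have hsum : (f + ε • g) + (f - ε • g) = (2 : ℝ) • f := by rw [two_smul]; abel
  obtain ⟨hadd', hsub'⟩ := hF.2.2.2 _ hadd _ hsub (hsum ▸ hF.2.1 2 zero_le_two f hf)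
  have hdiff : (f + ε • g) - (f - ε • g) = (2 * ε) • g := by rw [mul_smul, two_smul]; abel
  have hmem := (Submodule.span ℝ F).sub_mem (Submodule.subset_span hadd')
    (Submodule.subset_span hsub')
  rwa [hdiff, Submodule.smul_mem_iff _ (mul_ne_zero two_ne_zero hε)] at hmem

lemma isBigO_principal_of_isBigO_cocompact {α E F : Type*} [TopologicalSpace α]
    [NormedAddCommGroup E] [NormedAddCommGroup F] {u : α → E} {v : α → F} {I : Set α}
    (hI : IsClosed I) (hu : ContinuousOn u I) (hv : ContinuousOn v I)
    (hv0 : ∀ x ∈ I, v x ≠ 0) (h : u =O[cocompact α] v) : u =O[𝓟 I] v := by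
  obtain ⟨c, hc⟩ := h.bound
  obtain ⟨K, hK, hKc⟩ := mem_cocompact.1 hc
  have hIK : IsCompact (I ∩ K) := hK.inter_left hI
  have hfar : u =O[𝓟 {x | ‖u x‖ ≤ c * ‖v x‖}] v := isBigO_principal.2 ⟨c, fun x hx => hx⟩
  have hnear : u =O[𝓟 (I ∩ K)] v :=
    ((hu.mono inter_subset_left).isBigO_principal hIK (by norm_num : ‖(1 : ℝ)‖ ≠ 0)).trans
      ((hv.mono inter_subset_left).isBigO_rev_principal hIK (fun x hx => hv0 x hx.1) 1)
  refine (hfar.sup hnear).mono ?_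
  rw [sup_principal, principal_mono]
  intro x hx
  by_cases hxK : x ∈ K
  exacts [Or.inr ⟨hx, hxK⟩, Or.inl (hKc hxK)]

namespace Polynomial

lemma isBigO_principal_of_degree_le {R : Type*} [NormedRing R] [NormMulClass R] [ProperSpace R]
    {p q : R[X]} {I : Set R} (hI : IsClosed I) (hq : ∀ x ∈ I, q.eval x ≠ 0)
    (hpq : p.degree ≤ q.degree) : (fun x => p.eval x) =O[𝓟 I] fun x => q.eval x :=
  isBigO_principal_of_isBigO_cocompact hI p.continuousOn q.continuousOn hq
    (Metric.cobounded_eq_cocompact (α := R) ▸ isBigO_cobounded_of_degree_le hpq)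

lemma exists_mul_eq_forall_eval_ne_zero {K : Type*} [Field K] {f : K[X]} (hf : f ≠ 0)
    (I : Set K) :
    ∃ w q : K[X], w * q = f ∧ (∀ s ∈ I, q.eval s ≠ 0) ∧
      ∀ g : K[X], (∀ s ∈ I, (X - C s) ^ rootMultiplicity s f ∣ g) → w ∣ g := by
  classical
  set T := f.roots.toFinset.filter (· ∈ I)
  have hdvd : ∀ g : K[X], (∀ s ∈ I, (X - C s) ^ rootMultiplicity s f ∣ g) →
      ∏ s ∈ T, (X - C s) ^ rootMultiplicity s f ∣ g := fun g hg =>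
    Finset.prod_dvd_of_coprime
      (fun _ _ _ _ hab => (pairwise_coprime_X_sub_C Function.injective_id hab).pow)
      fun s hs => hg s (Finset.mem_filter.1 hs).2
  obtain ⟨q, hq⟩ := hdvd f fun s _ => pow_rootMultiplicity_dvd f s
  refine ⟨_, q, hq.symm, fun s hs hqs => ?_, hdvd⟩
  -- a root of `q` in `I` would be a root of `f` of multiplicity larger than its own
  have hsT : s ∈ T := by
    refine Finset.mem_filter.2 ⟨Multiset.mem_toFinset.2 ((mem_roots hf).2 ?_), hs⟩
    rw [IsRoot.def, hq, eval_mul, hqs, mul_zero]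
  apply pow_rootMultiplicity_not_dvd hf s
  calc (X - C s) ^ (rootMultiplicity s f + 1)
      = (X - C s) ^ rootMultiplicity s f * (X - C s) := pow_succ _ _
    _ ∣ (X - C s) ^ rootMultiplicity s f *
          (∏ t ∈ T.erase s, (X - C t) ^ rootMultiplicity t f) * q := by
      rw [mul_assoc]
      exact mul_dvd_mul_left _ (dvd_mul_of_dvd_right (dvd_iff_isRoot.2 hqs) _)
    _ = f := by
      rw [Finset.mul_prod_erase T (fun t => (X - C t) ^ rootMultiplicity t f) hsT, ← hq]

lemma exists_pos_mul_abs_le {I : Set ℝ} (hI : IsClosed I) {f g : ℝ[X]}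
    (hf : ∀ x ∈ I, 0 ≤ f.eval x) (hdeg : g.degree ≤ f.degree)
    (hdvd : ∀ s ∈ I, (X - C s) ^ rootMultiplicity s f ∣ g) :
    ∃ ε > 0, ∀ x ∈ I, ε * |g.eval x| ≤ f.eval x := by
  rcases eq_or_ne f 0 with rfl | hf0
  · refine ⟨1, one_pos, fun x _ => ?_⟩
    simp only [degree_zero, le_bot_iff, degree_eq_bot] at hdeg
    simp [hdeg]
  obtain ⟨w, q, hwq, hq, hw⟩ := exists_mul_eq_forall_eval_ne_zero hf0 I
  obtain ⟨g', rfl⟩ := hw g hdvd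
  have hw0 : w.degree ≠ ⊥ := degree_ne_bot.2 (left_ne_zero_of_mul (hwq ▸ hf0))
  have hdeg' : g'.degree ≤ q.degree := by
    rwa [← hwq, degree_mul, degree_mul, WithBot.add_le_add_iff_left hw0] at hdeg
  obtain ⟨M, hM, hMb⟩ := (isBigO_principal_of_degree_le hI hq hdeg').exists_pos
  refine ⟨M⁻¹, inv_pos.2 hM, fun x hx => ?_⟩
  have hgq : M⁻¹ * |g'.eval x| ≤ |q.eval x| :=
    (inv_mul_le_iff₀ hM).2 (isBigOWith_principal.1 hMb x hx)
  calc M⁻¹ * |(w * g').eval x| = |w.eval x| * (M⁻¹ * |g'.eval x|) := by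
        rw [eval_mul, abs_mul]; ring
    _ ≤ |w.eval x| * |q.eval x| := mul_le_mul_of_nonneg_left hgq (abs_nonneg _)
    _ = f.eval x := by rw [← abs_mul, ← eval_mul, hwq, abs_of_nonneg (hf x hx)]

lemma pow_dvd_of_pow_dvd_add {I : Set ℝ} {s : ℝ} (hs : AccPt s (𝓟 I)) {g h : ℝ[X]}
    (hg : ∀ x ∈ I, 0 ≤ g.eval x) (hh : ∀ x ∈ I, 0 ≤ h.eval x) {n : ℕ}
    (hgh : (X - C s) ^ n ∣ g + h) : (X - C s) ^ n ∣ g := by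
  rcases eq_or_ne g 0 with rfl | hg0
  · exact dvd_zero _
  by_contra hn
  set k := rootMultiplicity s g
  have hkn : k + 1 ≤ n := by
    by_contra hnk
    exact hn ((pow_dvd_pow _ (by omega)).trans (pow_rootMultiplicity_dvd g s))
  obtain ⟨g₁, hg₁, hg₁s⟩ := exists_eq_pow_rootMultiplicity_mul_and_not_dvd g hg0 s
  rw [dvd_iff_isRoot, IsRoot.def] at hg₁s
  obtain ⟨u, hu⟩ := (pow_dvd_pow _ hkn).trans hgh
  set h₁ := (X - C s) * u - g₁
  have hh₁ : h = (X - C s) ^ k * h₁ := by linear_combination hu - hg₁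
  -- `g h = (X - s) ^ (2 k) g₁ h₁` with `g₁ h₁ < 0` at `s`, hence at points of `I` near `s`
  have hneg : (g₁ * h₁).eval s < 0 := by
    have : (g₁ * h₁).eval s = -(g₁.eval s * g₁.eval s) := by simp [h₁]
    rw [this, neg_lt_zero]
    exact mul_self_pos.2 hg₁s
  obtain ⟨x, ⟨hxs, hxI⟩, hx⟩ : ∃ x, (x ≠ s ∧ x ∈ I) ∧ (g₁ * h₁).eval x < 0 :=
    ((accPt_iff_frequently.1 hs).and_eventually
      ((g₁ * h₁).continuous.tendsto s |>.eventually_lt_const hneg)).exists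
  have hpos : 0 < ((x - s) ^ k) ^ 2 := pow_two_pos_of_ne_zero (pow_ne_zero k (sub_ne_zero.2 hxs))
  have hgh_eval : g.eval x * h.eval x = ((x - s) ^ k) ^ 2 * (g₁ * h₁).eval x := by
    rw [hg₁, hh₁]; simp only [eval_mul, eval_pow, eval_sub, eval_X, eval_C]; ring
  linarith [mul_nonneg (hg x hxI) (hh x hxI), mul_neg_of_pos_of_neg hpos hx]

lemma leadingCoeff_nonneg_of_eventually_nonneg {p : ℝ[X]}
    (hp : ∀ᶠ x in atTop, 0 ≤ p.eval x) : 0 ≤ p.leadingCoeff := by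
  by_contra! hlc
  rcases le_or_gt p.degree 0 with hdeg | hdeg
  · obtain ⟨x, hx⟩ := hp.exists
    rw [eq_C_of_degree_le_zero hdeg] at hx hlc
    simp only [eval_C, leadingCoeff_C] at hx hlc
    linarith
  · have hneg := (p.tendsto_atBot_of_leadingCoeff_nonpos hdeg hlc.le).eventually
      (eventually_lt_atBot 0)
    obtain ⟨x, hx, hx'⟩ := (hp.and hneg).exists
    linarith

lemma degree_le_degree_add_of_eventually_nonneg_atTop {g h : ℝ[X]}
    (hg : ∀ᶠ x in atTop, 0 ≤ g.eval x) (hh : ∀ᶠ x in atTop, 0 ≤ h.eval x) :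
    g.degree ≤ (g + h).degree := by
  by_contra! hlt
  have hg0 : g ≠ 0 := ne_zero_of_degree_gt hlt
  -- the leading terms of `g` and `h` cancel, but both leading coefficients are positive
  have hlch : h.leadingCoeff = -g.leadingCoeff := by
    simpa using leadingCoeff_sub_of_degree_lt' hlt
  have := leadingCoeff_nonneg_of_eventually_nonneg hh
  have := (leadingCoeff_nonneg_of_eventually_nonneg hg).lt_of_ne
    (leadingCoeff_ne_zero.2 hg0).symm
  linarith

lemma degree_le_degree_add_of_eventually_nonneg_atBot {g h : ℝ[X]}
    (hg : ∀ᶠ x in atBot, 0 ≤ g.eval x) (hh : ∀ᶠ x in atBot, 0 ≤ h.eval x) :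
    g.degree ≤ (g + h).degree := by
  have hreflect : ∀ p : ℝ[X], (∀ᶠ x in atBot, 0 ≤ p.eval x) →
      ∀ᶠ x in atTop, 0 ≤ (p.comp (-X)).eval x := fun p hp =>
    (tendsto_neg_atTop_atBot.eventually hp).mono fun x hx => by simpa using hx
  have := degree_le_degree_add_of_eventually_nonneg_atTop (hreflect g hg) (hreflect h hh)
  rwa [← add_comp, degree_comp_neg_X, degree_comp_neg_X] at this

end Polynomial

lemma accPt_of_Ioi_subset {α : Type*} [TopologicalSpace α] [LinearOrder α] [OrderTopology α]
    [DenselyOrdered α] [NoMaxOrder α] {s : α} {I : Set α} (h : Ioi s ⊆ I) : AccPt s (𝓟 I) :=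
  accPt_principal_iff_nhdsWithin.2 <|
    (nhdsGT_neBot s).mono (nhdsWithin_mono s fun _ hx => ⟨h hx, ne_of_gt hx⟩)

lemma accPt_of_Iio_subset {α : Type*} [TopologicalSpace α] [LinearOrder α] [OrderTopology α]
    [DenselyOrdered α] [NoMinOrder α] {s : α} {I : Set α} (h : Iio s ⊆ I) : AccPt s (𝓟 I) :=
  accPt_principal_iff_nhdsWithin.2 <|
    (nhdsLT_neBot s).mono (nhdsWithin_mono s fun _ hx => ⟨h hx, ne_of_lt hx⟩)

noncomputable def nonnegCone (V : Submodule ℝ ℝ[X]) (I : Set ℝ) : PointedCone ℝ ℝ[X] where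
  carrier := {g | g ∈ V ∧ ∀ x ∈ I, 0 ≤ g.eval x}
  add_mem' := fun ⟨hgV, hg⟩ ⟨hhV, hh⟩ =>
    ⟨V.add_mem hgV hhV, fun x hx => by simpa using add_nonneg (hg x hx) (hh x hx)⟩
  zero_mem' := ⟨V.zero_mem, fun _ _ => by simp⟩
  smul_mem' := fun c _ ⟨hgV, hg⟩ =>
    ⟨V.smul_mem (c : ℝ) hgV, fun x hx => by
      simpa [← Nonneg.coe_smul] using mul_nonneg c.2 (hg x hx)⟩

-- `U_f`: the condition `ord_s g ≥ ord_s f` is written as divisibility by `(X - s) ^ ord_s f`.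
noncomputable def vanishingSubspace (V : Submodule ℝ ℝ[X]) (I : Set ℝ) (f : ℝ[X]) :
    Submodule ℝ ℝ[X] :=
  V ⊓ degreeLE ℝ f.degree ⊓
    ⨅ s ∈ I, (Ideal.span {(X - C s) ^ rootMultiplicity s f}).restrictScalars ℝ

lemma mem_vanishingSubspace {V : Submodule ℝ ℝ[X]} {I : Set ℝ} {f g : ℝ[X]} :
    g ∈ vanishingSubspace V I f ↔
      g ∈ V ∧ g.degree ≤ f.degree ∧ ∀ s ∈ I, (X - C s) ^ rootMultiplicity s f ∣ g := by
  simp only [vanishingSubspace, Submodule.mem_inf, mem_degreeLE, Submodule.mem_iInf,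
    Submodule.restrictScalars_mem, Ideal.mem_span_singleton, and_assoc]

section SupportingFace

variable {V : Submodule ℝ ℝ[X]} {I : Set ℝ} {f : ℝ[X]} {F : Set ℝ[X]}

lemma IsSupportingFace.subset_vanishingSubspace (hacc : ∀ s ∈ I, AccPt s (𝓟 I))
    (hunb : (∀ᶠ x in atTop, x ∈ I) ∨ ∀ᶠ x in atBot, x ∈ I)
    (hF : IsSupportingFace (nonnegCone V I) f F) : F ⊆ vanishingSubspace V I f := by
  intro g hg
  obtain ⟨hgV, hgI⟩ := hF.1.1 hg
  obtain ⟨c, -, -, hcI⟩ := hF.exists_smul_sub_mem hg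
  have hsum : g + (c • f - g) = c • f := add_sub_cancel g _
  refine _root_.mem_vanishingSubspace.2 ⟨hgV, ?_, fun s hs => ?_⟩
  · calc g.degree ≤ (g + (c • f - g)).degree := by
          rcases hunb with hI | hI
          exacts [degree_le_degree_add_of_eventually_nonneg_atTop (hI.mono hgI) (hI.mono hcI),
            degree_le_degree_add_of_eventually_nonneg_atBot (hI.mono hgI) (hI.mono hcI)]
      _ ≤ f.degree := by rw [hsum]; exact degree_smul_le c f
  · refine pow_dvd_of_pow_dvd_add (hacc s hs) hgI hcI ?_
    rw [hsum, smul_eq_C_mul]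
    exact dvd_mul_of_dvd_right (pow_rootMultiplicity_dvd f s) _

lemma IsSupportingFace.vanishingSubspace_le_span (hI : IsClosed I)
    (hF : IsSupportingFace (nonnegCone V I) f F) :
    vanishingSubspace V I f ≤ Submodule.span ℝ F := by
  intro g hg
  obtain ⟨hgV, hdeg, hdvd⟩ := mem_vanishingSubspace.1 hg
  obtain ⟨hfV, hfI⟩ := hF.1.1 hF.2.1
  obtain ⟨ε, hε, hεg⟩ := exists_pos_mul_abs_le hI hfI hdeg hdvd
  have hbound : ∀ x ∈ I, |(ε • g).eval x| ≤ f.eval x := fun x hx => by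
    rw [eval_smul, smul_eq_mul, abs_mul, abs_of_pos hε]
    exact hεg x hx
  refine hF.1.mem_span_of_add_sub_mem hF.2.1 hε.ne'
    ⟨V.add_mem hfV (V.smul_mem ε hgV), fun x hx => ?_⟩
    ⟨V.sub_mem hfV (V.smul_mem ε hgV), fun x hx => ?_⟩
  · rw [eval_add]
    linarith [neg_abs_le ((ε • g).eval x), hbound x hx]
  · rw [eval_sub]
    linarith [le_abs_self ((ε • g).eval x), hbound x hx]

end SupportingFace

theorem stmt_3_general (V : Submodule ℝ (Polynomial ℝ))
    (I : Set ℝ)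
    (hI : I = Set.univ ∨ (∃ a, I = Set.Ici a) ∨ ∃ a, I = Set.Iic a)
    (f : ℝ[X]) (F : Set ℝ[X])
    (hF : IsSupportingFace {g : ℝ[X] | g ∈ V ∧ ∀ x ∈ I, 0 ≤ g.eval x} f F) :
    (Submodule.span ℝ F : Set ℝ[X]) =
      {g : ℝ[X] | g ∈ V ∧ g.degree ≤ f.degree ∧
        ∀ s ∈ I, (X - C s) ^ (rootMultiplicity s f) ∣ g} := by
  have hF' : IsSupportingFace (nonnegCone V I) f F := hF
  have hIc : IsClosed I := by
    rcases hI with rfl | ⟨a, rfl⟩ | ⟨a, rfl⟩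
    exacts [isClosed_univ, isClosed_Ici, isClosed_Iic]
  have hacc : ∀ s ∈ I, AccPt s (𝓟 I) := by
    rcases hI with rfl | ⟨a, rfl⟩ | ⟨a, rfl⟩ <;> intro s hs
    exacts [accPt_of_Ioi_subset (subset_univ _), accPt_of_Ioi_subset (Ioi_subset_Ici hs),
      accPt_of_Iio_subset (Iio_subset_Iic hs)]
  have hunb : (∀ᶠ x in atTop, x ∈ I) ∨ ∀ᶠ x in atBot, x ∈ I := by
    rcases hI with rfl | ⟨a, rfl⟩ | ⟨a, rfl⟩
    exacts [Or.inl (univ_mem' mem_univ), Or.inl (eventually_ge_atTop a),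
      Or.inr (eventually_le_atBot a)]
  have hspan : Submodule.span ℝ F = vanishingSubspace V I f :=
    le_antisymm (Submodule.span_le.2 (hF'.subset_vanishingSubspace hacc hunb))
      (hF'.vanishingSubspace_le_span hIc)
  rw [hspan]
  exact Set.ext fun _ => mem_vanishingSubspace

theorem stmt_3 (V : Submodule ℝ (Polynomial ℝ)) [FiniteDimensional ℝ V]
    (I : Set ℝ)
    (hI : I = Set.univ ∨ (∃ a, I = Set.Ici a) ∨ ∃ a, I = Set.Iic a)
    (f : ℝ[X]) (hfV : f ∈ V) (hf0 : f ≠ 0)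
    (hfP : ∀ x ∈ I, 0 ≤ f.eval x) (F : Set ℝ[X])
    (hF : IsSupportingFace {g : ℝ[X] | g ∈ V ∧ ∀ x ∈ I, 0 ≤ g.eval x} f F) :
    (Submodule.span ℝ F : Set ℝ[X]) =
      {g : ℝ[X] | g ∈ V ∧ g.degree ≤ f.degree ∧
        ∀ s ∈ I, (X - C s) ^ (rootMultiplicity s f) ∣ g} :=
  stmt_3_general V I hI f F hF
end

section
/- Identify linear functionals on ℝ[t]_d with vectors v = (v_0, …, v_d) ∈ ℝ^{d+1} via v_i = v(t^i). For d > 2k ≥ 2, the dual cone of SOCF_{2k+1,d} = Σ_{i=0}^{d−2k} t^i Σ_{2k} equals the set of v ∈ ℝ^{d+1} such that the (k+1)×(k+1) Hankel matrices M_{s,k}(v) = (v_{s+i+j})_{i,j=0,…,k} are positive semidefinite for all s = 0, 1, …, d − 2k. -/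
open Polynomial

/-- The cone `SOCF_{2k+1,d}` of finite sums of copositive `(2k+1)`-nomials of degree
at most `d`. -/
def SOCF (k d : ℕ) : Set (Polynomial ℝ) :=
  {f : ℝ[X] | ∃ (l : ℕ) (g : Fin l → ℝ[X]),
    (∀ i, (g i).support.card ≤ 2 * k + 1 ∧ (g i).natDegree ≤ d ∧
      ∀ x : ℝ, 0 ≤ x → 0 ≤ (g i).eval x) ∧
    f = ∑ i, g i}

/-!
A `(2k+1)`-nomial has at most `2k` sign changes. A polynomial `f ≥ 0` on `[0, ∞)` with `V` sign
changes is a sum of terms `t^c q²` with `2 deg q ≤ V` and `c + 2 deg q ≤ deg f`: subtracting the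
minimum of `f` on `[0, ∞)` creates a root `β ≥ 0`; then either `f = t g`, or `β > 0` is a double
root and `f = (t - β)² h`, where by Descartes' rule `h` has at least two sign changes fewer; induct
on the degree. Padding with even powers of `t`, each such term is `t^s r²` with `s ≤ d - 2k` and
`deg r ≤ k`, on which `v` evaluates to the quadratic form of `M_{s,k}(v)`. Conversely these terms
lie in `SOCF_{2k+1,d}` themselves, so both cones have the same dual.
-/

open Finset Filter

namespace Polynomial

variable {R : Type*}

section Semiring

variable [Semiring R] {P : R[X]}

theorem divX_X_mul (P : R[X]) : (X * P).divX = P := by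
  ext n; simp [coeff_X_mul]

theorem coeffList_eq_coeffList_divX_append (h : P.divX ≠ 0) :
    P.coeffList = P.divX.coeffList ++ [P.coeff 0] := by
  have hP : P ≠ 0 := by rintro rfl; simp at h
  have hdeg : P.natDegree = P.divX.natDegree + 1 := by
    have := natDegree_divX_eq_natDegree_tsub_one (p := P)
    have : P.natDegree ≠ 0 := fun h0 => h (by
      rw [divX_eq_zero_iff]; exact eq_C_of_natDegree_eq_zero h0)
    omega
  simp [coeffList, withBotSucc_degree_eq_natDegree_add_one hP,
    withBotSucc_degree_eq_natDegree_add_one h, hdeg, List.range_succ_eq_map (n := _ + 1),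
    Function.comp_def]

theorem card_support_X_pow_mul_le {p : R[X]} {n : ℕ} (s : ℕ)
    (hp : p.natDegree ≤ n) : #(X ^ s * p).support ≤ n + 1 := by
  calc #(X ^ s * p).support ≤ #(Icc s (s + n)) := card_le_card fun i hi => ?_
    _ = n + 1 := by rw [Nat.card_Icc]; omega
  rw [mem_support_iff, coeff_X_pow_mul'] at hi
  split_ifs at hi with h
  · have := le_natDegree_of_ne_zero hi
    rw [mem_Icc]
    omega
  · exact absurd rfl hi

variable [LinearOrder R]

theorem signVariations_le_card_support_sub_one (P : R[X]) :
    P.signVariations ≤ #P.support - 1 := by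
  induction hn : #P.support generalizing P with
  | zero => simp_all
  | succ n ih =>
    rcases n with _ | n
    · obtain ⟨i, a, rfl⟩ := card_support_le_one_iff_monomial.1 hn.le
      simp
    · have := ih P.eraseLead (by rw [card_support_eraseLead, hn]; rfl)
      have := signVariations_le_eraseLead_succ P
      omega

theorem signVariations_X_mul (P : R[X]) : (X * P).signVariations = P.signVariations := by
  rcases eq_or_ne P 0 with rfl | hP
  · simp
  have h : (X * P).divX ≠ 0 := by rwa [divX_X_mul]
  simp [signVariations, coeffList_eq_coeffList_divX_append h, divX_X_mul]

end Semiring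

section StrictOrderedRing

variable [Ring R] [LinearOrder R] [IsStrictOrderedRing R] {P : R[X]}

theorem signVariations_sub_C_le {c : R} (hc : 0 ≤ c) (hcP : c ≤ P.coeff 0) :
    (P - C c).signVariations ≤ P.signVariations := by
  rcases eq_or_ne P.divX 0 with h | h
  · rw [divX_eq_zero_iff] at h
    rw [h, ← C_sub, ← monomial_zero_left, signVariations_monomial]
    exact Nat.zero_le _
  have hdivX : (P - C c).divX = P.divX := by ext n; simp
  have h' : (P - C c).divX ≠ 0 := by rwa [hdivX]
  rw [signVariations, signVariations, coeffList_eq_coeffList_divX_append h,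
    coeffList_eq_coeffList_divX_append h', hdivX, coeff_sub, coeff_C_zero]
  rcases hcP.lt_or_eq with hlt | rfl
  · simp only [List.map_append, List.map_singleton, sign_pos (sub_pos.2 hlt),
      sign_pos (hc.trans_lt hlt), le_refl]
  · simp only [sub_self, List.map_append, List.filter_append, List.map_singleton, sign_zero,
      List.filter_singleton, ne_eq, not_true_eq_false, decide_false, cond_false, List.append_nil]
    refine Nat.sub_le_sub_right ?_ 1
    exact (List.isChain_destutter _ _).length_le_length_destutter_ne
      ((List.destutter_sublist _ _).trans (List.sublist_append_left _ _))

end StrictOrderedRing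

section Real

theorem eval_nonneg_of_eval_mul_nonneg {p h : ℝ[X]} {β : ℝ}
    (hp : ∀ x, 0 ≤ x → x ≠ β → 0 < p.eval x) (hph : ∀ x, 0 ≤ x → 0 ≤ (p * h).eval x) :
    ∀ x, 0 ≤ x → 0 ≤ h.eval x := by
  have off : ∀ x, 0 ≤ x → x ≠ β → 0 ≤ h.eval x := fun x hx hxβ =>
    nonneg_of_mul_nonneg_right (by simpa using hph x hx) (hp x hx hxβ)
  intro x hx
  rcases eq_or_ne x β with rfl | hxβ
  · exact ge_of_tendsto (h.continuous.tendsto x |>.mono_left nhdsWithin_le_nhds)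
      (eventually_nhdsWithin_of_forall (s := Set.Ioi x) fun y hy =>
        off y (hx.trans (le_of_lt hy)) (ne_of_gt hy))
  · exact off x hx hxβ

theorem sq_X_sub_C_dvd_of_isLocalMin {f : ℝ[X]} {β : ℝ} (hroot : f.IsRoot β)
    (hmin : IsLocalMin (fun x => f.eval x) β) : (X - C β) ^ 2 ∣ f := by
  rcases eq_or_ne f 0 with rfl | hf0
  · exact dvd_zero _
  rw [← le_rootMultiplicity_iff hf0, Nat.succ_le_iff, one_lt_rootMultiplicity_iff_isRoot hf0]
  refine ⟨hroot, ?_⟩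
  simpa [IsRoot, Polynomial.deriv] using hmin.deriv_eq_zero

theorem exists_isMinOn_Ici {f : ℝ[X]} (hdeg : 0 < f.natDegree)
    (hf : ∀ x, 0 ≤ x → 0 ≤ f.eval x) :
    ∃ β ∈ Set.Ici (0 : ℝ), IsMinOn (fun x => f.eval x) (Set.Ici 0) β := by
  refine f.continuous.continuousOn.exists_isMinOn' isClosed_Ici Set.self_mem_Ici ?_
  rw [cocompact_eq_atBot_atTop, inf_sup_right, eventually_sup, eventually_inf_principal,
    eventually_inf_principal]
  refine ⟨?_, ?_⟩
  · filter_upwards [eventually_lt_atBot 0] with x hx hx0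
    exact absurd hx0 (not_le.2 hx)
  · have := f.abs_tendsto_atTop (natDegree_pos_iff_degree_pos.1 hdeg)
    filter_upwards [this.eventually_ge_atTop (f.eval 0)] with x hx hx0
    rwa [abs_of_nonneg (hf x hx0)] at hx

end Real

end Polynomial

noncomputable def shiftedSOS (d m : ℕ) : AddSubmonoid ℝ[X] :=
  AddSubmonoid.closure
    {f | ∃ (c : ℕ) (q : ℝ[X]), c + 2 * q.natDegree ≤ d ∧ 2 * q.natDegree ≤ m ∧ X ^ c * q ^ 2 = f}

section ShiftedSOS

variable {d m : ℕ} {f : ℝ[X]}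

theorem X_pow_mul_sq_mem_shiftedSOS {c : ℕ} {q : ℝ[X]} (hd : c + 2 * q.natDegree ≤ d)
    (hm : 2 * q.natDegree ≤ m) : X ^ c * q ^ 2 ∈ shiftedSOS d m :=
  AddSubmonoid.subset_closure ⟨c, q, hd, hm, rfl⟩

theorem shiftedSOS_mono {d' m' : ℕ} (hd : d ≤ d') (hm : m ≤ m') :
    shiftedSOS d m ≤ shiftedSOS d' m' :=
  AddSubmonoid.closure_mono <| by
    rintro _ ⟨c, q, hc, hq, rfl⟩
    exact ⟨c, q, by omega, by omega, rfl⟩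

theorem C_mem_shiftedSOS {a : ℝ} (ha : 0 ≤ a) : C a ∈ shiftedSOS d m := by
  simpa [← C_pow, Real.sq_sqrt ha] using
    X_pow_mul_sq_mem_shiftedSOS (d := d) (m := m) (c := 0) (q := C √a) (by simp) (by simp)

theorem X_mul_mem_shiftedSOS (hf : f ∈ shiftedSOS d m) : X * f ∈ shiftedSOS (d + 1) m := by
  induction hf using AddSubmonoid.closure_induction with
  | mem f hf =>
    obtain ⟨c, q, hc, hq, rfl⟩ := hf
    rw [← mul_assoc, ← pow_succ']
    exact X_pow_mul_sq_mem_shiftedSOS (by omega) hq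
  | zero => simp
  | add f g _ _ hf hg => rw [mul_add]; exact add_mem hf hg

theorem sq_mul_mem_shiftedSOS (r : ℝ[X]) (hf : f ∈ shiftedSOS d m) :
    r ^ 2 * f ∈ shiftedSOS (d + 2 * r.natDegree) (m + 2 * r.natDegree) := by
  induction hf using AddSubmonoid.closure_induction with
  | mem f hf =>
    obtain ⟨c, q, hc, hq, rfl⟩ := hf
    rw [show r ^ 2 * (X ^ c * q ^ 2) = X ^ c * (r * q) ^ 2 by ring]
    have := natDegree_mul_le (p := r) (q := q)
    exact X_pow_mul_sq_mem_shiftedSOS (by omega) (by omega)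
  | zero => simp
  | add f g _ _ hf hg => rw [mul_add]; exact add_mem hf hg

end ShiftedSOS

theorem mem_shiftedSOS_of_nonneg_of_isRoot {f : ℝ[X]} (hf : ∀ x, 0 ≤ x → 0 ≤ f.eval x)
    {β : ℝ} (hβ : 0 ≤ β) (hroot : f.IsRoot β)
    (ih : ∀ g : ℝ[X], g.natDegree < f.natDegree → (∀ x, 0 ≤ x → 0 ≤ g.eval x) →
      g ∈ shiftedSOS g.natDegree g.signVariations) :
    f ∈ shiftedSOS f.natDegree f.signVariations := by
  rcases eq_or_ne f 0 with rfl | hf0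
  · exact zero_mem _
  rcases hβ.eq_or_lt with rfl | hβ
  · obtain ⟨g, rfl⟩ : X ∣ f := X_dvd_iff.2 (by rwa [coeff_zero_eq_eval_zero])
    have hg0 : g ≠ 0 := right_ne_zero_of_mul hf0
    have hg : ∀ x, 0 ≤ x → 0 ≤ g.eval x :=
      eval_nonneg_of_eval_mul_nonneg (fun x hx hx0 => by simpa using hx.lt_of_ne' hx0) hf
    rw [natDegree_X_mul hg0] at ih ⊢
    rw [signVariations_X_mul]
    exact X_mul_mem_shiftedSOS (ih g (Nat.lt_succ_self _) hg)
  · have hmin : IsLocalMin (fun x => f.eval x) β := by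
      filter_upwards [Ioi_mem_nhds hβ] with x hx
      rw [hroot.eq_zero]
      exact hf x (le_of_lt hx)
    obtain ⟨h, rfl⟩ := sq_X_sub_C_dvd_of_isLocalMin hroot hmin
    have hh0 : h ≠ 0 := right_ne_zero_of_mul hf0
    have hh : ∀ x, 0 ≤ x → 0 ≤ h.eval x :=
      eval_nonneg_of_eval_mul_nonneg (fun x _ hxβ => by simpa using pow_pos (abs_pos.2 (sub_ne_zero.2 hxβ)) 2) hf
    have hdeg : ((X - C β) ^ 2 * h).natDegree = h.natDegree + 2 := by
      rw [natDegree_mul (pow_ne_zero 2 (X_sub_C_ne_zero β)) hh0, natDegree_pow,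
        natDegree_X_sub_C, add_comm]
    have hV : h.signVariations + 2 ≤ ((X - C β) ^ 2 * h).signVariations := by
      have h1 := succ_signVariations_le_X_sub_C_mul hβ hh0
      have h2 := succ_signVariations_le_X_sub_C_mul hβ (mul_ne_zero (X_sub_C_ne_zero β) hh0)
      rw [← mul_assoc, ← sq] at h2
      omega
    have := sq_mul_mem_shiftedSOS (X - C β) (ih h (by omega) hh)
    rw [natDegree_X_sub_C] at this
    exact shiftedSOS_mono (by omega) (by omega) this

theorem mem_shiftedSOS_of_nonneg (f : ℝ[X]) (hf : ∀ x, 0 ≤ x → 0 ≤ f.eval x) :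
    f ∈ shiftedSOS f.natDegree f.signVariations := by
  induction hn : f.natDegree using Nat.strong_induction_on generalizing f with
  | _ n ih =>
  subst hn
  rcases Nat.eq_zero_or_pos f.natDegree with h0 | hpos
  · rw [eq_C_of_natDegree_eq_zero h0, coeff_zero_eq_eval_zero]
    exact C_mem_shiftedSOS (hf 0 le_rfl)
  obtain ⟨β, hβ, hmin⟩ := exists_isMinOn_Ici hpos hf
  set c := f.eval β
  have hc : 0 ≤ c := hf β hβ
  have hg : ∀ x, 0 ≤ x → 0 ≤ (f - C c).eval x := fun x hx => by
    simpa using hmin (Set.mem_Ici.2 hx)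
  have hroot : (f - C c).IsRoot β := by simp [c]
  have hdeg : (f - C c).natDegree = f.natDegree := natDegree_sub_C
  have hV : (f - C c).signVariations ≤ f.signVariations :=
    signVariations_sub_C_le hc (by simpa [coeff_zero_eq_eval_zero] using hmin Set.self_mem_Ici)
  have hgmem := mem_shiftedSOS_of_nonneg_of_isRoot hg hβ hroot
    (fun g hg hg' => ih _ (hdeg ▸ hg) g hg' rfl)
  simpa using add_mem (shiftedSOS_mono hdeg.le hV hgmem) (C_mem_shiftedSOS hc)

theorem SOCF_subset_shiftedSOS (k d : ℕ) : SOCF k d ⊆ shiftedSOS d (2 * k) := by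
  rintro _ ⟨l, g, hg, rfl⟩
  refine sum_mem fun i _ => ?_
  obtain ⟨hcard, hdeg, hnonneg⟩ := hg i
  have := signVariations_le_card_support_sub_one (g i)
  exact shiftedSOS_mono hdeg (by omega) (mem_shiftedSOS_of_nonneg _ hnonneg)

theorem X_pow_mul_sq_mem_SOCF {k d s : ℕ} {q : ℝ[X]} (hq : q.natDegree ≤ k)
    (hs : s + 2 * k ≤ d) : X ^ s * q ^ 2 ∈ SOCF k d := by
  have hq2 : (q ^ 2).natDegree ≤ 2 * k := natDegree_pow_le.trans (by omega)
  refine ⟨1, fun _ => X ^ s * q ^ 2, fun _ => ⟨card_support_X_pow_mul_le s hq2, ?_, ?_⟩, by simp⟩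
  · exact natDegree_mul_le.trans (by rw [natDegree_X_pow]; omega)
  · intro x hx
    simp only [eval_mul, eval_pow, eval_X]
    positivity

section Moments

open Matrix

variable {d : ℕ} (v : Fin (d + 1) → ℝ)

noncomputable def momentFunctional : ℝ[X] →ₗ[ℝ] ℝ := ∑ i, v i • lcoeff ℝ i

theorem momentFunctional_apply (f : ℝ[X]) :
    momentFunctional v f = ∑ i : Fin (d + 1), v i * f.coeff i := by
  simp [momentFunctional]

theorem momentFunctional_C_mul_X_pow (a : ℝ) {e : ℕ} (he : e < d + 1) :
    momentFunctional v (C a * X ^ e) = a * v ⟨e, he⟩ := by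
  rw [momentFunctional_apply, Finset.sum_eq_single ⟨e, he⟩]
  · rw [coeff_C_mul_X_pow, if_pos rfl, mul_comm]
  · intro i _ hi
    simp [coeff_C_mul, coeff_X_pow, Fin.ext_iff.not.1 hi]
  · simp

def hankel (s k : ℕ) (hs : s + 2 * k ≤ d) : Matrix (Fin (k + 1)) (Fin (k + 1)) ℝ :=
  Matrix.of fun i j => v ⟨s + i + j, by omega⟩

theorem momentFunctional_X_pow_mul_sq {s k : ℕ} (hs : s + 2 * k ≤ d) (x : Fin (k + 1) → ℝ) :
    momentFunctional v (X ^ s * (∑ j : Fin (k + 1), C (x j) * X ^ (j : ℕ)) ^ 2) =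
      x ⬝ᵥ hankel v s k hs *ᵥ x := by
  have hexp : X ^ s * (∑ j : Fin (k + 1), C (x j) * X ^ (j : ℕ)) ^ 2 =
      ∑ i : Fin (k + 1), ∑ j : Fin (k + 1), C (x i * x j) * X ^ (s + i + j) := by
    rw [sq, Finset.sum_mul_sum, Finset.mul_sum]
    refine Finset.sum_congr rfl fun i _ => ?_
    rw [Finset.mul_sum]
    refine Finset.sum_congr rfl fun j _ => ?_
    rw [C_mul, pow_add, pow_add]
    ring
  rw [hexp]
  simp only [map_sum, dotProduct, mulVec, Finset.mul_sum]
  refine Finset.sum_congr rfl fun i _ => Finset.sum_congr rfl fun j _ => ?_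
  have := i.isLt
  have := j.isLt
  rw [momentFunctional_C_mul_X_pow v _ (by omega)]
  simp only [hankel, of_apply]
  ring

theorem posSemidef_hankel_iff {s k : ℕ} (hs : s + 2 * k ≤ d) :
    (hankel v s k hs).PosSemidef ↔ ∀ x : Fin (k + 1) → ℝ,
      0 ≤ momentFunctional v (X ^ s * (∑ j : Fin (k + 1), C (x j) * X ^ (j : ℕ)) ^ 2) := by
  have hsymm : (hankel v s k hs).IsSymm := Matrix.IsSymm.ext fun i j => by
    simp only [hankel, of_apply]
    congr 2
    omega
  simp [Matrix.posSemidef_iff_dotProduct_mulVec, hsymm, momentFunctional_X_pow_mul_sq v hs]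

theorem momentFunctional_nonneg_of_mem_shiftedSOS {k : ℕ} (hd : 2 * k < d)
    (hv : ∀ s (hs : s + 2 * k ≤ d), (hankel v s k hs).PosSemidef) {f : ℝ[X]}
    (hf : f ∈ shiftedSOS d (2 * k)) : 0 ≤ momentFunctional v f := by
  induction hf using AddSubmonoid.closure_induction with
  | mem f hf =>
    obtain ⟨c, q, hc, hq, rfl⟩ := hf
    -- For odd `c` the remaining shift is still `≥ 1`: this is where `2k < d` is needed.
    set u := min (c / 2) (k - q.natDegree)
    have hs : c - 2 * u + 2 * k ≤ d := by omega
    have hr : (X ^ u * q).natDegree ≤ k :=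
      natDegree_mul_le.trans (by rw [natDegree_X_pow]; omega)
    have hpad : X ^ c * q ^ 2 = X ^ (c - 2 * u) * (X ^ u * q) ^ 2 := by
      rw [mul_pow, ← pow_mul, ← mul_assoc, ← pow_add]
      congr 2
      omega
    rw [hpad, as_sum_range_C_mul_X_pow' (X ^ u * q) (n := k + 1) (by omega),
      ← Fin.sum_univ_eq_sum_range]
    exact (posSemidef_hankel_iff v hs).1 (hv _ hs) _
  | zero => simp
  | add f g _ _ hf hg => rw [map_add]; exact add_nonneg hf hg

end Moments

/-- Identifying functionals on `ℝ[t]_d` with vectors `v ∈ ℝ^{d+1}` via `v_i = v(t^i)`,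
the dual cone of `SOCF_{2k+1,d}` is the set of `v` whose Hankel matrices
`M_{s,k}(v) = (v_{s+i+j})` are positive semidefinite for `s = 0, …, d - 2k`. -/
theorem stmt_15 (k d : ℕ) (hd : 2 * k < d) :
    {v : Fin (d + 1) → ℝ | ∀ f ∈ SOCF k d,
        0 ≤ ∑ i : Fin (d + 1), v i * f.coeff (i : ℕ)} =
      {v : Fin (d + 1) → ℝ | ∀ (s : ℕ) (hs : s ≤ d - 2 * k),
        (Matrix.of fun i j : Fin (k + 1) =>
          v ⟨s + (i : ℕ) + (j : ℕ), by
            have hi := i.isLt; have hj := j.isLt; omega⟩).PosSemidef} := by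
  ext v
  simp only [Set.mem_ofPred_eq, ← momentFunctional_apply]
  constructor
  · intro hv s hs
    refine (posSemidef_hankel_iff v (by omega : s + 2 * k ≤ d)).2 fun x =>
      hv _ (X_pow_mul_sq_mem_SOCF ?_ (by omega))
    exact natDegree_sum_le_of_forall_le _ _ fun j _ =>
      natDegree_C_mul_X_pow_le _ _ |>.trans (by omega)
  · intro hv f hf
    exact momentFunctional_nonneg_of_mem_shiftedSOS v hd (fun s hs => hv s (by omega))
      (SOCF_subset_shiftedSOS k d hf)
end
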